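/- arXiv:1203.1526 — 5 statements merged into one kernel-verified Lean document; each statement's English description precedes it below -/
import Mathlib

section
/- Let r_1,...,r_n ∈ R^3 with at least two of them non-collinear, and let γ_1,...,γ_n > 0. Then the matrix W_γ = -∑_{i=1}^n γ_i S(r_i)^2 is symmetric positive definite. -/
/-!
Since `S(r)` is skew-symmetric, `y ⬝ W_γ y = ∑ γᵢ ‖rᵢ × y‖²`, a sum of nonnegative terms.
A nonzero `y` cannot be collinear with two non-collinear vectors `rᵢ, rⱼ`, so one term is positive.
-/

open Matrix

/-- The skew-symmetric (cross-product) matrix map `S : ℝ³ → so(3)`. -/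
def skewS (x : Fin 3 → ℝ) : Matrix (Fin 3) (Fin 3) ℝ :=
  !![0, -x 2, x 1; x 2, 0, -x 0; -x 1, x 0, 0]

section SkewSymmetric

variable {m R : Type*} [Fintype m] [CommRing R] {A : Matrix m m R}

theorem transpose_mul_self_of_transpose_eq_neg (hA : Aᵀ = -A) : (A * A)ᵀ = A * A := by
  rw [transpose_mul, hA, neg_mul_neg]

theorem dotProduct_mul_self_mulVec_of_transpose_eq_neg (hA : Aᵀ = -A) (y : m → R) :
    y ⬝ᵥ (A * A) *ᵥ y = -((A *ᵥ y) ⬝ᵥ (A *ᵥ y)) := by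
  rw [← mulVec_mulVec, dotProduct_mulVec, ← mulVec_transpose, hA, neg_mulVec, neg_dotProduct]

end SkewSymmetric

theorem cross_eq_zero_of_cross_eq_zero {F : Type*} [Field F] {x y z : Fin 3 → F} (hy : y ≠ 0)
    (hx : x ⨯₃ y = 0) (hz : z ⨯₃ y = 0) : x ⨯₃ z = 0 := by
  have multiple_of_y : ∀ v : Fin 3 → F, v ⨯₃ y = 0 → ∃ a : F, a • y = v := fun v hv => by
    have : ¬LinearIndependent F ![y, v] := by
      rw [← crossProduct_ne_zero_iff_linearIndependent, not_not, ← cross_anticomm, hv, neg_zero]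
    simpa [LinearIndependent.pair_iff' hy] using this
  obtain ⟨a, rfl⟩ := multiple_of_y x hx
  obtain ⟨b, rfl⟩ := multiple_of_y z hz
  simp [cross_self]

theorem skewS_transpose (x : Fin 3 → ℝ) : (skewS x)ᵀ = -skewS x := by
  ext i j
  fin_cases i <;> fin_cases j <;> simp [skewS]

theorem skewS_mulVec (x y : Fin 3 → ℝ) : skewS x *ᵥ y = x ⨯₃ y := by
  ext i
  fin_cases i <;> simp [skewS, cross_apply, mulVec, dotProduct, Fin.sum_univ_three] <;> ring

theorem dotProduct_neg_sum_smul_skewS_sq_mulVec {ι : Type*} [Fintype ι] (r : ι → Fin 3 → ℝ)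
    (γ : ι → ℝ) (y : Fin 3 → ℝ) :
    y ⬝ᵥ (-(∑ i, γ i • (skewS (r i) * skewS (r i)))) *ᵥ y =
      ∑ i, γ i * ((r i ⨯₃ y) ⬝ᵥ (r i ⨯₃ y)) := by
  simp only [neg_mulVec, dotProduct_neg, sum_mulVec, dotProduct_sum, smul_mulVec, dotProduct_smul,
    dotProduct_mul_self_mulVec_of_transpose_eq_neg (skewS_transpose _), skewS_mulVec, smul_eq_mul,
    mul_neg, Finset.sum_neg_distrib, neg_neg]

theorem stmt8 (n : ℕ) (r : Fin n → Fin 3 → ℝ) (γ : Fin n → ℝ) (hγ : ∀ i, 0 < γ i)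
    (hnc : ∃ i j, crossProduct (r i) (r j) ≠ 0) :
    (-(∑ i, γ i • (skewS (r i) * skewS (r i))))ᵀ = -(∑ i, γ i • (skewS (r i) * skewS (r i))) ∧
    ∀ y : Fin 3 → ℝ, y ≠ 0 →
      0 < y ⬝ᵥ (-(∑ i, γ i • (skewS (r i) * skewS (r i)))).mulVec y := by
  refine ⟨?_, fun y hy => ?_⟩
  · simp only [transpose_neg, transpose_sum, transpose_smul,
      transpose_mul_self_of_transpose_eq_neg (skewS_transpose _)]
  obtain ⟨i, j, hij⟩ := hnc
  obtain ⟨k, hk⟩ : ∃ k, r k ⨯₃ y ≠ 0 := by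
    by_contra! h
    exact hij (cross_eq_zero_of_cross_eq_zero hy (h i) (h j))
  rw [dotProduct_neg_sum_smul_skewS_sq_mulVec]
  refine Finset.sum_pos' (fun l _ => mul_nonneg (hγ l).le ?_) ⟨k, Finset.mem_univ k, ?_⟩
  · exact Finset.sum_nonneg fun _ _ => mul_self_nonneg _
  · exact mul_pos (hγ k) (by simpa using dotProduct_self_star_pos_iff.mpr hk)
end

section
/- Let r_i ∈ R^3, γ_i > 0, b_i = R^T r_i and b̂_i = R̂^T r_i for rotation matrices R, R̂ ∈ SO(3), and let the unit quaternion Q̃ = (q̃0, q̃) satisfy R(Q̃) = R R̂^T. Then ∑_{i=1}^n γ_i S(b̂_i) b_i = -2 R̂^T (q̃0 I_3 - S(q̃)) W_γ q̃, where W_γ = -∑ γ_i S(r_i)^2. -/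
/-!
A proper rotation commutes with the cross product, `S (Rhᵀ v) = Rhᵀ S(v) Rh`, and
`Rᵀ = Rhᵀ R(Q̃)ᵀ`; hence every summand is `Rhᵀ S(rᵢ) R(Q̃)ᵀ rᵢ`, and the claim reduces to an
identity for a single vector `r`, namely `S(r) R(Q̃)ᵀ r = 2 (q̃0 I₃ - S(q̃)) S(r)² q̃`.
-/

open Matrix

/-- The Rodriguez rotation matrix associated to a quaternion `(q0, q)`. -/
def rod (q0 : ℝ) (q : Fin 3 → ℝ) : Matrix (Fin 3) (Fin 3) ℝ :=
  (q0 ^ 2 - q ⬝ᵥ q) • (1 : Matrix (Fin 3) (Fin 3) ℝ) +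
    (2 : ℝ) • Matrix.vecMulVec q q + (2 * q0) • skewS q

lemma transpose_mul_skewS_mulVec_mul (M : Matrix (Fin 3) (Fin 3) ℝ) (a : Fin 3 → ℝ) :
    Mᵀ * skewS (M *ᵥ a) * M = M.det • skewS a := by
  ext i j
  fin_cases i <;> fin_cases j <;>
    simp [mul_apply, skewS, mulVec, det_fin_three, Fin.sum_univ_three, dotProduct] <;> ring

lemma skewS_transpose_mulVec {M : Matrix (Fin 3) (Fin 3) ℝ} (hM : M * Mᵀ = 1)
    (a : Fin 3 → ℝ) : skewS (Mᵀ *ᵥ a) = M.det • (Mᵀ * skewS a * M) := by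
  have hMt : Mᵀ * M = 1 := mul_eq_one_comm.mp hM
  have hconj : M * skewS (Mᵀ *ᵥ a) * Mᵀ = M.det • skewS a := by
    simpa using transpose_mul_skewS_mulVec_mul Mᵀ a
  calc skewS (Mᵀ *ᵥ a) = (Mᵀ * M) * skewS (Mᵀ *ᵥ a) * (Mᵀ * M) := by simp [hMt]
    _ = Mᵀ * (M * skewS (Mᵀ *ᵥ a) * Mᵀ) * M := by simp only [Matrix.mul_assoc]
    _ = M.det • (Mᵀ * skewS a * M) := by rw [hconj, Matrix.mul_smul, Matrix.smul_mul]

/- `(rod q0 q)ᵀ r = (q0² - q ⬝ᵥ q) r + 2 (q ⬝ᵥ r) q - 2 q0 (q × r)`; the first term dies under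
`r × ·` and the rest is the BAC-CAB rule. -/
lemma skewS_mul_rod_transpose_mulVec_self (q0 : ℝ) (q r : Fin 3 → ℝ) :
    (skewS r * (rod q0 q)ᵀ) *ᵥ r = (2 : ℝ) • ((q0 • 1 - skewS q) * (skewS r * skewS r)) *ᵥ q := by
  ext i
  fin_cases i <;>
    simp [mul_apply, skewS, rod, mulVec, Fin.sum_univ_three, dotProduct, vecMulVec,
      one_apply] <;> ring

lemma skewS_mulVec_of_rod_eq {R Rh : Matrix (Fin 3) (Fin 3) ℝ} (hRh : Rh * Rhᵀ = 1)
    (hRhdet : Rh.det = 1) {q0 : ℝ} {q : Fin 3 → ℝ} (hrel : rod q0 q = R * Rhᵀ) (r : Fin 3 → ℝ) :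
    skewS (Rhᵀ *ᵥ r) *ᵥ (Rᵀ *ᵥ r) =
      (2 : ℝ) • (Rhᵀ * (q0 • 1 - skewS q) * (skewS r * skewS r)) *ᵥ q := by
  have hRt : Rᵀ = Rhᵀ * (rod q0 q)ᵀ := by
    rw [hrel, transpose_mul, transpose_transpose, ← Matrix.mul_assoc, mul_eq_one_comm.mp hRh,
      Matrix.one_mul]
  rw [skewS_transpose_mulVec hRh, hRhdet, one_smul, hRt, mulVec_mulVec]
  calc (Rhᵀ * skewS r * Rh * (Rhᵀ * (rod q0 q)ᵀ)) *ᵥ r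
      = Rhᵀ *ᵥ ((skewS r * (rod q0 q)ᵀ) *ᵥ r) := by
        simp only [mulVec_mulVec, Matrix.mul_assoc, ← Matrix.mul_assoc Rh, hRh, Matrix.one_mul]
    _ = _ := by
        rw [skewS_mul_rod_transpose_mulVec_self, mulVec_smul, mulVec_mulVec, Matrix.mul_assoc]

theorem stmt11_general (n : ℕ) (r : Fin n → Fin 3 → ℝ) (γ : Fin n → ℝ)
    (R Rh : Matrix (Fin 3) (Fin 3) ℝ)
    (hRh : Rh * Rhᵀ = 1) (hRhdet : Rh.det = 1)
    (q0 : ℝ) (q : Fin 3 → ℝ)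
    (hrel : rod q0 q = R * Rhᵀ) :
    (∑ i, γ i • (skewS (Rhᵀ.mulVec (r i))).mulVec (Rᵀ.mulVec (r i))) =
      (-2 : ℝ) • Rhᵀ.mulVec
        ((q0 • (1 : Matrix (Fin 3) (Fin 3) ℝ) - skewS q).mulVec
          ((-(∑ i, γ i • (skewS (r i) * skewS (r i)))).mulVec q)) := by
  simp only [skewS_mulVec_of_rod_eq hRh hRhdet hrel, neg_mulVec, mulVec_neg, smul_neg, sum_mulVec,
    mulVec_sum, Finset.smul_sum, smul_mulVec, mulVec_smul, smul_smul, mulVec_mulVec,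
    Matrix.mul_assoc, mul_comm (γ _), neg_mul, neg_smul, Finset.sum_neg_distrib, neg_neg]

theorem stmt11 (n : ℕ) (r : Fin n → Fin 3 → ℝ) (γ : Fin n → ℝ) (hγ : ∀ i, 0 < γ i)
    (R Rh : Matrix (Fin 3) (Fin 3) ℝ)
    (hR : R * Rᵀ = 1) (hRdet : R.det = 1) (hRh : Rh * Rhᵀ = 1) (hRhdet : Rh.det = 1)
    (q0 : ℝ) (q : Fin 3 → ℝ) (hunit : q0 ^ 2 + q ⬝ᵥ q = 1)
    (hrel : rod q0 q = R * Rhᵀ) :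
    (∑ i, γ i • (skewS (Rhᵀ.mulVec (r i))).mulVec (Rᵀ.mulVec (r i))) =
      (-2 : ℝ) • Rhᵀ.mulVec
        ((q0 • (1 : Matrix (Fin 3) (Fin 3) ℝ) - skewS q).mulVec
          ((-(∑ i, γ i • (skewS (r i) * skewS (r i)))).mulVec q)) :=
  stmt11_general n r γ R Rh hRh hRhdet q0 q hrel
end

section
/- Let Q = (q0, q) be a unit quaternion, r_i ∈ R^3, ρ_i > 0, and b_i = R(Q)^T r_i. Then ∑_{i=1}^n ρ_i S(r_i) b_i = -2 (q0 I_3 - S(q)) W_ρ q, where W_ρ = -∑ ρ_i S(r_i)^2. -/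
open Matrix

lemma key (r q : Fin 3 → ℝ) (q0 : ℝ) :
    (skewS r).mulVec ((rod q0 q)ᵀ.mulVec r) =
      (-2 : ℝ) • ((q0 • (1 : Matrix (Fin 3) (Fin 3) ℝ) - skewS q).mulVec
        ((-(skewS r * skewS r)).mulVec q)) := by
  funext j
  fin_cases j <;>
    simp [rod, skewS, mulVec, dotProduct, vecMulVec, Fin.sum_univ_three, Matrix.mul_apply,
      Matrix.one_apply, Matrix.add_apply, Matrix.smul_apply, Matrix.sub_apply,
      Matrix.neg_apply, Matrix.transpose_apply] <;>
    ring

theorem stmt12 (n : ℕ) (r : Fin n → Fin 3 → ℝ) (ρ : Fin n → ℝ) (hρ : ∀ i, 0 < ρ i)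
    (q0 : ℝ) (q : Fin 3 → ℝ) (hunit : q0 ^ 2 + q ⬝ᵥ q = 1) :
    (∑ i, ρ i • (skewS (r i)).mulVec ((rod q0 q)ᵀ.mulVec (r i))) =
      (-2 : ℝ) • ((q0 • (1 : Matrix (Fin 3) (Fin 3) ℝ) - skewS q).mulVec
        ((-(∑ i, ρ i • (skewS (r i) * skewS (r i)))).mulVec q)) := by
  simp_rw [key]
  let f : Matrix (Fin 3) (Fin 3) ℝ →ₗ[ℝ] (Fin 3 → ℝ) :=
    { toFun := fun X => (-2 : ℝ) • ((q0 • (1 : Matrix (Fin 3) (Fin 3) ℝ) - skewS q) *ᵥ ((-X) *ᵥ q))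
      map_add' := by
        intro X Y
        simp [neg_add, Matrix.add_mulVec, Matrix.mulVec_add, smul_add, add_comm]
      map_smul' := by
        intro c X
        funext j
        simp [mulVec, dotProduct, Fin.sum_univ_three, Matrix.sub_apply, Matrix.smul_apply,
          Matrix.one_apply, Matrix.neg_apply, mul_add, mul_comm, mul_left_comm]
        ring }
  show (∑ i, ρ i • f (skewS (r i) * skewS (r i))) = f (∑ i, ρ i • (skewS (r i) * skewS (r i)))
  rw [map_sum]
  exact Finset.sum_congr rfl fun i _ => (f.map_smul (ρ i) _).symm
end

section
/- Let W be a symmetric positive definite 3×3 matrix and (q̃0, q̃) a unit quaternion. Then (q̃0 I_3 - S(q̃)) W q̃ = 0 if and only if either (q̃0 = ±1 and q̃ = 0), or (q̃0 = 0 and q̃ is a unit eigenvector of W). -/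
open Matrix

theorem stmt13 (W : Matrix (Fin 3) (Fin 3) ℝ) (hsymm : Wᵀ = W)
    (hpos : ∀ y : Fin 3 → ℝ, y ≠ 0 → 0 < y ⬝ᵥ W.mulVec y)
    (q0 : ℝ) (q : Fin 3 → ℝ) (hunit : q0 ^ 2 + q ⬝ᵥ q = 1) :
    (q0 • (1 : Matrix (Fin 3) (Fin 3) ℝ) - skewS q).mulVec (W.mulVec q) = 0 ↔
      ((q0 = 1 ∨ q0 = -1) ∧ q = 0) ∨
      (q0 = 0 ∧ q ⬝ᵥ q = 1 ∧ ∃ lam : ℝ, W.mulVec q = lam • q) := by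
  have hmul : ∀ y : Fin 3 → ℝ,
      (q0 • (1 : Matrix (Fin 3) (Fin 3) ℝ) - skewS q).mulVec y =
      ![q0 * y 0 - (q 1 * y 2 - q 2 * y 1),
        q0 * y 1 - (q 2 * y 0 - q 0 * y 2),
        q0 * y 2 - (q 0 * y 1 - q 1 * y 0)] := by
    intro y
    funext i
    fin_cases i <;>
      simp [skewS, Matrix.mulVec, dotProduct, Fin.sum_univ_three,
        Matrix.sub_apply, Matrix.smul_apply, Matrix.one_apply] <;> ring
  set v := W.mulVec q with hv
  have hdot : q ⬝ᵥ v = q 0 * v 0 + q 1 * v 1 + q 2 * v 2 := by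
    simp [dotProduct, Fin.sum_univ_three]
  constructor
  · intro h
    rw [hmul] at h
    have h0 := congrFun h 0
    have h1 := congrFun h 1
    have h2 := congrFun h 2
    simp only [Matrix.cons_val_zero, Matrix.cons_val_one, Matrix.head_cons,
      Matrix.cons_val_two, Matrix.tail_cons, Pi.zero_apply] at h0 h1 h2
    by_cases hq : q = 0
    · left
      refine ⟨?_, hq⟩
      subst hq
      simp [dotProduct] at hunit
      exact hunit
    · right
      have hpv : 0 < q ⬝ᵥ v := hpos q hq
      have key : q0 * (q 0 * v 0 + q 1 * v 1 + q 2 * v 2) = 0 := by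
        linear_combination q 0 * h0 + q 1 * h1 + q 2 * h2
      rw [hdot] at hpv
      have hq0 : q0 = 0 := by
        rcases mul_eq_zero.mp key with h' | h'
        · exact h'
        · exfalso; linarith
      subst hq0
      refine ⟨rfl, by linarith [hunit], ?_⟩
      have e0 : q 1 * v 2 = q 2 * v 1 := by linarith
      have e1 : q 2 * v 0 = q 0 * v 2 := by linarith
      have e2 : q 0 * v 1 = q 1 * v 0 := by linarith
      have hcase : q 0 ≠ 0 ∨ q 1 ≠ 0 ∨ q 2 ≠ 0 := by
        by_contra hc
        push_neg at hc
        apply hq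
        funext j
        fin_cases j <;> simp [hc.1, hc.2.1, hc.2.2]
      rcases hcase with hi | hi | hi
      · refine ⟨v 0 / q 0, ?_⟩
        have hj0 : v 0 = v 0 / q 0 * q 0 := by field_simp
        have hj1 : v 1 = v 0 / q 0 * q 1 := by
          field_simp; linear_combination e2
        have hj2 : v 2 = v 0 / q 0 * q 2 := by
          field_simp; linear_combination -e1
        funext j
        fin_cases j <;> simp only [Pi.smul_apply, smul_eq_mul] <;>
          first | exact hj0 | exact hj1 | exact hj2
      · refine ⟨v 1 / q 1, ?_⟩
        have hj0 : v 0 = v 1 / q 1 * q 0 := by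
          field_simp; linear_combination -e2
        have hj1 : v 1 = v 1 / q 1 * q 1 := by field_simp
        have hj2 : v 2 = v 1 / q 1 * q 2 := by
          field_simp; linear_combination e0
        funext j
        fin_cases j <;> simp only [Pi.smul_apply, smul_eq_mul] <;>
          first | exact hj0 | exact hj1 | exact hj2
      · refine ⟨v 2 / q 2, ?_⟩
        have hj0 : v 0 = v 2 / q 2 * q 0 := by
          field_simp; linear_combination e1
        have hj1 : v 1 = v 2 / q 2 * q 1 := by
          field_simp; linear_combination -e0
        have hj2 : v 2 = v 2 / q 2 * q 2 := by field_simp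
        funext j
        fin_cases j <;> simp only [Pi.smul_apply, smul_eq_mul] <;>
          first | exact hj0 | exact hj1 | exact hj2
  · rintro (⟨hq0, hq⟩ | ⟨hq0, hqq, lam, hW⟩)
    · subst hq
      simp [hv, Matrix.mulVec_zero]
    · have hv' : v = lam • q := hv.trans hW
      rw [hmul]
      funext j
      fin_cases j <;> (simp [hv', hq0]; try ring)
end

section
/- Let (q̃0, q̃) be a unit quaternion, W_γ a symmetric 3×3 matrix, and R̂, R ∈ SO(3) with R(Q̃) = R R̂^T. Then ∑_{i=1}^n γ_i ‖R̂^T r_i - R^T r_i‖^2 = 4 q̃^T W_γ q̃, where W_γ = -∑ γ_i S(r_i)^2 and γ_i > 0. -/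
/-
For rotations `R̂, R` the quantity `‖R̂ᵀ r - Rᵀ r‖²` equals `2 (‖r‖² - rᵀ R R̂ᵀ r)`, and for a unit
quaternion the quadratic form of its Rodriguez matrix is `(q̃0² - ‖q̃‖²) ‖r‖² + 2 (q̃ᵀ r)²`, so the
difference is `4 (‖q̃‖² ‖r‖² - (q̃ᵀ r)²) = 4 ‖r × q̃‖² = 4 q̃ᵀ (-S(r)²) q̃` (Lagrange's identity).
Summing with the weights `γ_i` gives the claim.
-/

open Matrix

theorem dotProduct_sub_transpose_mulVec_self {m : Type*} [Fintype m] [DecidableEq m]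
    (A B : Matrix m m ℝ) (hA : A * Aᵀ = 1) (hB : B * Bᵀ = 1) (x : m → ℝ) :
    (Aᵀ *ᵥ x - Bᵀ *ᵥ x) ⬝ᵥ (Aᵀ *ᵥ x - Bᵀ *ᵥ x) = 2 * (x ⬝ᵥ x - x ⬝ᵥ (B * Aᵀ) *ᵥ x) := by
  have hnorm : ∀ C : Matrix m m ℝ, C * Cᵀ = 1 → (Cᵀ *ᵥ x) ⬝ᵥ (Cᵀ *ᵥ x) = x ⬝ᵥ x := by
    intro C hC
    rw [dotProduct_mulVec, vecMul_transpose, mulVec_mulVec, hC, one_mulVec]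
  have hBA : (Bᵀ *ᵥ x) ⬝ᵥ (Aᵀ *ᵥ x) = x ⬝ᵥ (B * Aᵀ) *ᵥ x := by
    rw [mulVec_transpose, ← dotProduct_mulVec, mulVec_mulVec]
  have hAB : (Aᵀ *ᵥ x) ⬝ᵥ (Bᵀ *ᵥ x) = x ⬝ᵥ (B * Aᵀ) *ᵥ x := by
    rw [dotProduct_comm, hBA]
  rw [sub_dotProduct, dotProduct_sub, dotProduct_sub, hnorm A hA, hnorm B hB, hAB, hBA]
  ring

theorem dotProduct_rod_mulVec (q0 : ℝ) (q x : Fin 3 → ℝ) :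
    x ⬝ᵥ rod q0 q *ᵥ x = (q0 ^ 2 - q ⬝ᵥ q) * (x ⬝ᵥ x) + 2 * (q ⬝ᵥ x) ^ 2 := by
  simp [rod, skewS, dotProduct, mulVec, vecMulVec_apply, Fin.sum_univ_succ, Matrix.one_apply]
  ring

theorem dotProduct_neg_skewS_mul_self_mulVec (r x : Fin 3 → ℝ) :
    x ⬝ᵥ (-(skewS r * skewS r)) *ᵥ x = (r ⬝ᵥ r) * (x ⬝ᵥ x) - (r ⬝ᵥ x) ^ 2 := by
  simp [skewS, dotProduct, mulVec, Fin.sum_univ_succ]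
  ring

theorem dotProduct_sub_transpose_mulVec_self_of_rod_eq (q0 : ℝ) (q : Fin 3 → ℝ)
    (hunit : q0 ^ 2 + q ⬝ᵥ q = 1) (R Rh : Matrix (Fin 3) (Fin 3) ℝ) (hR : R * Rᵀ = 1)
    (hRh : Rh * Rhᵀ = 1) (hrel : rod q0 q = R * Rhᵀ) (r : Fin 3 → ℝ) :
    (Rhᵀ *ᵥ r - Rᵀ *ᵥ r) ⬝ᵥ (Rhᵀ *ᵥ r - Rᵀ *ᵥ r) =
      4 * (q ⬝ᵥ (-(skewS r * skewS r)) *ᵥ q) := by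
  rw [dotProduct_sub_transpose_mulVec_self Rh R hRh hR, ← hrel, dotProduct_rod_mulVec,
    dotProduct_neg_skewS_mul_self_mulVec, dotProduct_comm r q]
  linear_combination (-2 * (r ⬝ᵥ r)) * hunit

theorem stmt18_general (n : ℕ) (r : Fin n → Fin 3 → ℝ) (γ : Fin n → ℝ)
    (q0 : ℝ) (q : Fin 3 → ℝ) (hunit : q0 ^ 2 + q ⬝ᵥ q = 1)
    (R Rh : Matrix (Fin 3) (Fin 3) ℝ)
    (hR : R * Rᵀ = 1) (hRh : Rh * Rhᵀ = 1)
    (hrel : rod q0 q = R * Rhᵀ) :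
    (∑ i, γ i * ((Rhᵀ.mulVec (r i) - Rᵀ.mulVec (r i)) ⬝ᵥ (Rhᵀ.mulVec (r i) - Rᵀ.mulVec (r i)))) =
      4 * (q ⬝ᵥ (-(∑ i, γ i • (skewS (r i) * skewS (r i)))).mulVec q) := by
  simp only [dotProduct_sub_transpose_mulVec_self_of_rod_eq q0 q hunit R Rh hR hRh hrel]
  rw [← Finset.sum_neg_distrib, sum_mulVec, dotProduct_sum, Finset.mul_sum]
  refine Finset.sum_congr rfl fun i _ => ?_
  rw [← smul_neg, smul_mulVec, dotProduct_smul, smul_eq_mul]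
  ring

theorem stmt18 (n : ℕ) (r : Fin n → Fin 3 → ℝ) (γ : Fin n → ℝ) (hγ : ∀ i, 0 < γ i)
    (q0 : ℝ) (q : Fin 3 → ℝ) (hunit : q0 ^ 2 + q ⬝ᵥ q = 1)
    (R Rh : Matrix (Fin 3) (Fin 3) ℝ)
    (hR : R * Rᵀ = 1) (hRdet : R.det = 1) (hRh : Rh * Rhᵀ = 1) (hRhdet : Rh.det = 1)
    (hrel : rod q0 q = R * Rhᵀ) :
    (∑ i, γ i * ((Rhᵀ.mulVec (r i) - Rᵀ.mulVec (r i)) ⬝ᵥ (Rhᵀ.mulVec (r i) - Rᵀ.mulVec (r i)))) =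
      4 * (q ⬝ᵥ (-(∑ i, γ i • (skewS (r i) * skewS (r i)))).mulVec q) :=
  stmt18_general n r γ q0 q hunit R Rh hR hRh hrel
end
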